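/- arXiv:1301.2483 — 2 statements merged into one kernel-verified Lean document; each statement's English description precedes it below -/
import Mathlib

section
/- For all positive integers m, n, each of the three complex component functions f of φ_{m,n} satisfies the partial differential equation σ(x)·∂/∂x(σ(x)·∂f/∂x) + 2·∂²f/∂y² + 2·ρ(x)·f = 0 for all real x, y; equivalently, each component of φ_{m,n} is an eigenfunction with eigenvalue 2 of the Laplace–Beltrami operator Δf = −(1/ρ(x))·(σ(x)·∂/∂x(σ(x)·∂f/∂x) + 2·∂²f/∂y²) of the induced metric. -/
open Real Complex

/-- The doubly periodic immersion `φ_{m,n} : ℝ² → ℂ³` of Karpukhin's family of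
minimal tori of revolution in `S⁵ ⊂ ℂ³`. -/
noncomputable def phiMN (m n : ℕ) (x y : ℝ) : Fin 3 → ℂ :=
  ![(Real.sqrt (((m : ℝ) + n) / (2 * m + n)) : ℂ) * Complex.exp (Complex.I * m * y) *
      (Real.sin x : ℂ),
    (Real.sqrt (((m : ℝ) + n) / (m + 2 * n)) : ℂ) * Complex.exp (Complex.I * n * y) *
      (Real.cos x : ℂ),
    (Real.sqrt ((n : ℝ) * Real.cos x ^ 2 / (m + 2 * n) +
        (m : ℝ) * Real.sin x ^ 2 / (2 * m + n)) : ℂ) *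
      Complex.exp (-(Complex.I * ((m : ℝ) + n) * y))]

/-- `σ(x) = √(m² + 4mn + n² − (m² − n²)cos 2x)`. -/
noncomputable def sigmaMN (m n : ℕ) (x : ℝ) : ℝ :=
  Real.sqrt ((m : ℝ) ^ 2 + 4 * m * n + n ^ 2 - ((m : ℝ) ^ 2 - n ^ 2) * Real.cos (2 * x))

/-- `ρ(x) = (m+n)(m+n − (m−n)cos 2x)`. -/
noncomputable def rhoMN (m n : ℕ) (x : ℝ) : ℝ :=
  ((m : ℝ) + n) * ((m : ℝ) + n - ((m : ℝ) - n) * Real.cos (2 * x))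

/-!
Each component of `φ_{m,n}` has the form `g(x) e^{iky}` with `g` real and
`k ∈ {m, n, -(m+n)}`, so the equation reduces to the ODE `σ (σ g')' + 2 (ρ - k²) g = 0`.
The radicand of `σ` equals `2 (n(2m+n) cos² x + m(m+2n) sin² x)`, which gives
`σ σ' = (m² - n²) sin 2x`; with this, the ODE for `g = sin` and `g = cos` is a trigonometric
identity, and the third profile is a constant multiple of `σ` itself, so that `σ g'` is a
multiple of `sin 2x`.
-/

theorem hasDerivAt_cexp_const_mul_ofReal (c : ℂ) (t : ℝ) :
    HasDerivAt (fun s : ℝ => cexp (c * s)) (c * cexp (c * t)) t := by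
  simpa [mul_comm] using ((hasDerivAt_id t).ofReal_comp.const_mul c).cexp

theorem separated_operator_eq {σ g g' : ℝ → ℝ} {ρ k h x : ℝ}
    (hg : ∀ t, HasDerivAt g (g' t) t) (hσg : HasDerivAt (fun t => σ t * g' t) h x) (y : ℝ) :
    (σ x : ℂ) *
        deriv (fun t : ℝ => (σ t : ℂ) * deriv (fun s : ℝ => (g s : ℂ) * cexp (I * k * y)) t) x +
      2 * deriv (fun s : ℝ => deriv (fun s' : ℝ => (g x : ℂ) * cexp (I * k * s')) s) y +
      2 * (ρ : ℂ) * ((g x : ℂ) * cexp (I * k * y)) =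
    ((σ x * h + 2 * (ρ - k ^ 2) * g x : ℝ) : ℂ) * cexp (I * k * y) := by
  have hx : ∀ t,
      deriv (fun s : ℝ => (g s : ℂ) * cexp (I * k * y)) t = g' t * cexp (I * k * y) :=
    fun t => ((hg t).ofReal_comp.mul_const _).deriv
  have hσx : (fun t : ℝ => (σ t : ℂ) * (g' t * cexp (I * k * y))) =
      fun t : ℝ => ((σ t * g' t : ℝ) : ℂ) * cexp (I * k * y) := by
    ext t; push_cast; ring
  have hy : ∀ s, deriv (fun s' : ℝ => (g x : ℂ) * cexp (I * k * s')) s =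
      g x * (I * k * cexp (I * k * s)) :=
    fun s => ((hasDerivAt_cexp_const_mul_ofReal _ s).const_mul _).deriv
  have hyy : deriv (fun s : ℝ => (g x : ℂ) * (I * k * cexp (I * k * s))) y =
      g x * (I * k * (I * k * cexp (I * k * y))) :=
    (((hasDerivAt_cexp_const_mul_ofReal _ y).const_mul _).const_mul _).deriv
  rw [funext hx, hσx, (hσg.ofReal_comp.mul_const _).deriv, funext hy, hyy]
  push_cast
  linear_combination (2 * k ^ 2 * g x * cexp (I * k * y)) * I_sq

/-- `σ (σ g')' + 2 (ρ - k²) g = 0`, the equation left for `g` after separating `e^{iky}`. -/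
def SolvesProfileEq (σ ρ : ℝ → ℝ) (k : ℝ) (g : ℝ → ℝ) : Prop :=
  ∃ g' : ℝ → ℝ, (∀ t, HasDerivAt g (g' t) t) ∧
    ∀ x, ∃ h, HasDerivAt (fun t => σ t * g' t) h x ∧ σ x * h + 2 * (ρ x - k ^ 2) * g x = 0

theorem SolvesProfileEq.operator_eq_zero {σ ρ g : ℝ → ℝ} {k : ℝ}
    (hg : SolvesProfileEq σ ρ k g) (x y : ℝ) :
    (σ x : ℂ) *
        deriv (fun t : ℝ => (σ t : ℂ) * deriv (fun s : ℝ => (g s : ℂ) * cexp (I * k * y)) t) x +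
      2 * deriv (fun s : ℝ => deriv (fun s' : ℝ => (g x : ℂ) * cexp (I * k * s')) s) y +
      2 * (ρ x : ℂ) * ((g x : ℂ) * cexp (I * k * y)) = 0 := by
  obtain ⟨g', hg', hode⟩ := hg
  obtain ⟨h, hh, hode⟩ := hode x
  rw [separated_operator_eq hg' hh, hode, ofReal_zero, zero_mul]

section

variable {m n : ℕ}

theorem sigmaMN_radicand_eq (t : ℝ) :
    (m : ℝ) ^ 2 + 4 * m * n + n ^ 2 - ((m : ℝ) ^ 2 - n ^ 2) * Real.cos (2 * t) =
      2 * (n * (2 * m + n) * Real.cos t ^ 2 + m * (m + 2 * n) * Real.sin t ^ 2) := by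
  rw [Real.cos_sq', Real.cos_two_mul, Real.cos_sq']; ring

theorem sq_sigmaMN (t : ℝ) :
    sigmaMN m n t ^ 2 =
      2 * (n * (2 * m + n) * Real.cos t ^ 2 + m * (m + 2 * n) * Real.sin t ^ 2) := by
  rw [sigmaMN, sigmaMN_radicand_eq, Real.sq_sqrt (by positivity)]

theorem sigmaMN_radicand_pos (hm : 0 < m) (hn : 0 < n) (t : ℝ) :
    0 < (m : ℝ) ^ 2 + 4 * m * n + n ^ 2 - ((m : ℝ) ^ 2 - n ^ 2) * Real.cos (2 * t) := by
  have hm1 : (1 : ℝ) ≤ m := by exact_mod_cast hm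
  have hn1 : (1 : ℝ) ≤ n := by exact_mod_cast hn
  rw [sigmaMN_radicand_eq]
  nlinarith [Real.sin_sq_add_cos_sq t, mul_nonneg (sq_nonneg (Real.sin t)) (by nlinarith :
    (0 : ℝ) ≤ m * (m + 2 * n) - 1), mul_nonneg (sq_nonneg (Real.cos t)) (by nlinarith :
    (0 : ℝ) ≤ n * (2 * m + n) - 1)]

theorem sigmaMN_pos (hm : 0 < m) (hn : 0 < n) (t : ℝ) : 0 < sigmaMN m n t :=
  Real.sqrt_pos.mpr (sigmaMN_radicand_pos hm hn t)

theorem hasDerivAt_sigmaMN (hm : 0 < m) (hn : 0 < n) (t : ℝ) :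
    HasDerivAt (sigmaMN m n) (((m : ℝ) ^ 2 - n ^ 2) * Real.sin (2 * t) / sigmaMN m n t) t := by
  have hrad := (((hasDerivAt_id' t).const_mul 2).cos.const_mul ((m : ℝ) ^ 2 - n ^ 2)).const_sub
    ((m : ℝ) ^ 2 + 4 * m * n + n ^ 2)
  refine (hrad.sqrt (sigmaMN_radicand_pos hm hn t).ne').congr_deriv ?_
  rw [sigmaMN]
  ring

theorem sigmaMN_mul_deriv_sigmaMN (hm : 0 < m) (hn : 0 < n) (t : ℝ) :
    sigmaMN m n t * (((m : ℝ) ^ 2 - n ^ 2) * Real.sin (2 * t) / sigmaMN m n t) =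
      ((m : ℝ) ^ 2 - n ^ 2) * (2 * Real.sin t * Real.cos t) := by
  rw [mul_div_cancel₀ _ (sigmaMN_pos hm hn t).ne', Real.sin_two_mul]

theorem solvesProfileEq_sin (hm : 0 < m) (hn : 0 < n) (a : ℝ) :
    SolvesProfileEq (sigmaMN m n) (rhoMN m n) m (fun t => a * Real.sin t) := by
  refine ⟨fun t => a * Real.cos t, fun t => (Real.hasDerivAt_sin t).const_mul a, fun x =>
    ⟨_, (hasDerivAt_sigmaMN hm hn x).mul ((Real.hasDerivAt_cos x).const_mul a), ?_⟩⟩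
  rw [rhoMN, Real.cos_two_mul]
  linear_combination (a * Real.cos x) * sigmaMN_mul_deriv_sigmaMN hm hn x
    - a * Real.sin x * sq_sigmaMN x
    - 2 * a * Real.sin x * (m ^ 2 + 2 * m * n) * Real.sin_sq_add_cos_sq x

theorem solvesProfileEq_cos (hm : 0 < m) (hn : 0 < n) (a : ℝ) :
    SolvesProfileEq (sigmaMN m n) (rhoMN m n) n (fun t => a * Real.cos t) := by
  refine ⟨fun t => a * -Real.sin t, fun t => (Real.hasDerivAt_cos t).const_mul a, fun x =>
    ⟨_, (hasDerivAt_sigmaMN hm hn x).mul ((Real.hasDerivAt_sin x).neg.const_mul a), ?_⟩⟩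
  rw [rhoMN, Real.cos_two_mul]
  linear_combination (-a * Real.sin x) * sigmaMN_mul_deriv_sigmaMN hm hn x
    - a * Real.cos x * sq_sigmaMN x
    - 2 * a * Real.cos x * (2 * m ^ 2 + 2 * m * n - n ^ 2) * Real.sin_sq_add_cos_sq x

theorem solvesProfileEq_sigmaMN (hm : 0 < m) (hn : 0 < n) (r : ℝ) :
    SolvesProfileEq (sigmaMN m n) (rhoMN m n) (-(m + n)) (fun t => r * sigmaMN m n t) := by
  refine ⟨fun t => r * (((m : ℝ) ^ 2 - n ^ 2) * Real.sin (2 * t) / sigmaMN m n t),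
    fun t => (hasDerivAt_sigmaMN hm hn t).const_mul r, fun x => ?_⟩
  have hprod : (fun t => sigmaMN m n t * (r * (((m : ℝ) ^ 2 - n ^ 2) * Real.sin (2 * t) /
      sigmaMN m n t))) = fun t => r * ((m : ℝ) ^ 2 - n ^ 2) * Real.sin (2 * t) := by
    ext t
    field_simp [(sigmaMN_pos hm hn t).ne']
  refine ⟨_, hprod ▸ ((hasDerivAt_id' x).const_mul 2).sin.const_mul _, ?_⟩
  rw [rhoMN]
  ring

theorem sqrt_phiMN_radicand_eq (hm : 0 < m) (x : ℝ) :
    √((n : ℝ) * Real.cos x ^ 2 / (m + 2 * n) + (m : ℝ) * Real.sin x ^ 2 / (2 * m + n)) =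
      (√(2 * ((m + 2 * n) * (2 * m + n))))⁻¹ * sigmaMN m n x := by
  have hm' : (0 : ℝ) < m := by exact_mod_cast hm
  rw [sigmaMN, sigmaMN_radicand_eq, ← Real.sqrt_inv, ← Real.sqrt_mul (by positivity)]
  congr 1
  field_simp

theorem phiMN_apply_zero (x y : ℝ) :
    phiMN m n x y 0 =
      ((√((m + n) / (2 * m + n)) * Real.sin x : ℝ) : ℂ) * cexp (I * (m : ℝ) * y) := by
  simp only [phiMN, Matrix.cons_val_zero, ofReal_mul, ofReal_natCast]
  ring

theorem phiMN_apply_one (x y : ℝ) :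
    phiMN m n x y 1 =
      ((√((m + n) / (m + 2 * n)) * Real.cos x : ℝ) : ℂ) * cexp (I * (n : ℝ) * y) := by
  simp only [phiMN, Matrix.cons_val_one, Matrix.cons_val_zero, ofReal_mul, ofReal_natCast]
  ring

theorem phiMN_apply_two (hm : 0 < m) (x y : ℝ) :
    phiMN m n x y 2 = (((√(2 * ((m + 2 * n) * (2 * m + n))))⁻¹ * sigmaMN m n x : ℝ) : ℂ) *
      cexp (I * (-(m + n) : ℝ) * y) := by
  simp only [phiMN, Matrix.cons_val_two, Matrix.tail_cons, Matrix.head_cons,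
    sqrt_phiMN_radicand_eq hm]
  push_cast
  ring_nf

end

/-- Each of the three complex component functions `f` of `φ_{m,n}` satisfies
`σ(x)·∂/∂x(σ(x)·∂f/∂x) + 2·∂²f/∂y² + 2·ρ(x)·f = 0`, i.e. it is an eigenfunction with
eigenvalue `2` of the Laplace–Beltrami operator
`Δf = −(1/ρ(x))·(σ(x)·∂/∂x(σ(x)·∂f/∂x) + 2·∂²f/∂y²)` of the induced metric. -/
theorem phiMN_component_eigenfunction (m n : ℕ) (hm : 0 < m) (hn : 0 < n)
    (x y : ℝ) (j : Fin 3) :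
    (sigmaMN m n x : ℂ) *
        deriv (fun t : ℝ => (sigmaMN m n t : ℂ) * deriv (fun s : ℝ => phiMN m n s y j) t) x +
      2 * deriv (fun s : ℝ => deriv (fun s' : ℝ => phiMN m n x s' j) s) y +
      2 * (rhoMN m n x : ℂ) * phiMN m n x y j = 0 := by
  match j with
  | 0 => simpa only [phiMN_apply_zero] using (solvesProfileEq_sin hm hn _).operator_eq_zero x y
  | 1 => simpa only [phiMN_apply_one] using (solvesProfileEq_cos hm hn _).operator_eq_zero x y
  | 2 => simpa only [phiMN_apply_two hm] using
      (solvesProfileEq_sigmaMN hm hn _).operator_eq_zero x y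
end

section
/- Let m, n be coprime positive integers with m > n and mn even, and set k = √((m² − n²)/(m² + 2mn)). Then 2·(√(m² + 2mn)·E(k) − (mn/√(m² + 2mn))·K(k)) ≤ 4(m + n) − 3. (Equivalently, Λ_{4(m+n)−3}(M_{m,n}) = 16π·(√(m²+2mn)·E(k) − (mn/√(m²+2mn))·K(k)) ≤ 8π·(4(m+n) − 3), which shows the metric on M_{m,n} is not maximal for Λ_{4(m+n)−3}.) -/
open Real

/-- The complete elliptic integral of the first kind,
`K(k) = ∫₀¹ dx/(√(1−x²)·√(1−k²x²))`. -/
noncomputable def ellK (k : ℝ) : ℝ :=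
  ∫ x in (0 : ℝ)..1, 1 / (Real.sqrt (1 - x ^ 2) * Real.sqrt (1 - k ^ 2 * x ^ 2))

/-- The complete elliptic integral of the second kind,
`E(k) = ∫₀¹ √(1−k²x²)/√(1−x²) dx`. -/
noncomputable def ellE (k : ℝ) : ℝ :=
  ∫ x in (0 : ℝ)..1, Real.sqrt (1 - k ^ 2 * x ^ 2) / Real.sqrt (1 - x ^ 2)

open MeasureTheory intervalIntegral

/-- integrability of the dominating function -/
lemma gInt : IntervalIntegrable (fun x : ℝ => (1 - x) ^ (-(1/2) : ℝ)) volume 0 1 := by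
  have h := (intervalIntegrable_rpow' (a := 0) (b := 1) (r := -(1/2)) (by norm_num)).comp_sub_left 1
  simpa using h.symm

lemma meas_fE (k : ℝ) :
    Measurable (fun x : ℝ => Real.sqrt (1 - k ^ 2 * x ^ 2) / Real.sqrt (1 - x ^ 2)) := by
  fun_prop

lemma meas_fK (k : ℝ) :
    Measurable (fun x : ℝ => 1 / (Real.sqrt (1 - x ^ 2) * Real.sqrt (1 - k ^ 2 * x ^ 2))) := by
  fun_prop

lemma sqrt_one_sub_sq_lower {x : ℝ} (hx0 : 0 ≤ x) (hx1 : x ≤ 1) :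
    Real.sqrt (1 - x) ≤ Real.sqrt (1 - x ^ 2) :=
  Real.sqrt_le_sqrt (by nlinarith)

lemma fE_le_g (k : ℝ) {x : ℝ} (hx0 : 0 ≤ x) (hx1 : x ≤ 1) :
    Real.sqrt (1 - k ^ 2 * x ^ 2) / Real.sqrt (1 - x ^ 2) ≤ (1 - x) ^ (-(1/2) : ℝ) := by
  rcases eq_or_lt_of_le hx1 with h1 | h1
  · subst h1
    simp [Real.zero_rpow]
  · have h1x : (0:ℝ) < 1 - x := by linarith
    rw [show ((1 - x) ^ (-(1/2) : ℝ)) = 1 / Real.sqrt (1 - x) by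
      rw [Real.rpow_neg h1x.le, ← Real.sqrt_eq_rpow, one_div]]
    exact div_le_div₀ zero_le_one (Real.sqrt_le_one.2 (by nlinarith [sq_nonneg (k*x)]))
      (Real.sqrt_pos.2 h1x) (sqrt_one_sub_sq_lower hx0 hx1)

lemma fE_int (k : ℝ) :
    IntervalIntegrable (fun x : ℝ => Real.sqrt (1 - k ^ 2 * x ^ 2) / Real.sqrt (1 - x ^ 2))
      volume 0 1 := by
  apply gInt.mono_fun' ((meas_fE k).aestronglyMeasurable)
  rw [Set.uIoc_of_le (by norm_num : (0:ℝ) ≤ 1)]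
  filter_upwards [ae_restrict_mem measurableSet_Ioc] with x hx
  rw [Real.norm_eq_abs, abs_of_nonneg (div_nonneg (Real.sqrt_nonneg _) (Real.sqrt_nonneg _))]
  exact fE_le_g k hx.1.le hx.2

lemma fK_le_g (k : ℝ) (hk : k ^ 2 < 1) {x : ℝ} (hx0 : 0 ≤ x) (hx1 : x ≤ 1) :
    1 / (Real.sqrt (1 - x ^ 2) * Real.sqrt (1 - k ^ 2 * x ^ 2)) ≤
      (Real.sqrt (1 - k ^ 2))⁻¹ * (1 - x) ^ (-(1/2) : ℝ) := by
  have hc : (0:ℝ) < Real.sqrt (1 - k ^ 2) := Real.sqrt_pos.2 (by linarith)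
  have hx2 : x ^ 2 ≤ 1 := by nlinarith
  have hB : Real.sqrt (1 - k ^ 2) ≤ Real.sqrt (1 - k ^ 2 * x ^ 2) :=
    Real.sqrt_le_sqrt (by nlinarith [mul_nonneg (sq_nonneg k) (by linarith : (0:ℝ) ≤ 1 - x ^ 2)])
  rcases eq_or_lt_of_le hx1 with h1 | h1
  · subst h1
    simp [Real.zero_rpow]
  · have h1x : (0:ℝ) < 1 - x := by linarith
    rw [show ((1 - x) ^ (-(1/2) : ℝ)) = 1 / Real.sqrt (1 - x) by
      rw [Real.rpow_neg h1x.le, ← Real.sqrt_eq_rpow, one_div]]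
    have hA : Real.sqrt (1 - x) ≤ Real.sqrt (1 - x ^ 2) := sqrt_one_sub_sq_lower hx0 hx1
    have hApos : (0:ℝ) < Real.sqrt (1 - x) := Real.sqrt_pos.2 h1x
    calc 1 / (Real.sqrt (1 - x ^ 2) * Real.sqrt (1 - k ^ 2 * x ^ 2))
        ≤ 1 / (Real.sqrt (1 - x) * Real.sqrt (1 - k ^ 2)) := by
          apply one_div_le_one_div_of_le (by positivity)
          exact mul_le_mul hA hB hc.le (Real.sqrt_nonneg _)
      _ = (Real.sqrt (1 - k ^ 2))⁻¹ * (1 / Real.sqrt (1 - x)) := by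
          field_simp

lemma fK_int (k : ℝ) (hk : k ^ 2 < 1) :
    IntervalIntegrable
      (fun x : ℝ => 1 / (Real.sqrt (1 - x ^ 2) * Real.sqrt (1 - k ^ 2 * x ^ 2)))
      volume 0 1 := by
  apply (gInt.const_mul ((Real.sqrt (1 - k ^ 2))⁻¹)).mono_fun' ((meas_fK k).aestronglyMeasurable)
  rw [Set.uIoc_of_le (by norm_num : (0:ℝ) ≤ 1)]
  filter_upwards [ae_restrict_mem measurableSet_Ioc] with x hx
  rw [Real.norm_eq_abs, abs_of_nonneg (by positivity)]
  exact fK_le_g k hk hx.1.le hx.2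

lemma ellE_nonneg (k : ℝ) : 0 ≤ ellE k := by
  apply intervalIntegral.integral_nonneg (by norm_num)
  intro x _
  positivity

lemma ellE_le_ellK (k : ℝ) (hk : k ^ 2 < 1) : ellE k ≤ ellK k := by
  apply intervalIntegral.integral_mono_on (by norm_num) (fE_int k) (fK_int k hk)
  intro x hx
  set A := Real.sqrt (1 - x ^ 2) with hA
  set B := Real.sqrt (1 - k ^ 2 * x ^ 2) with hB
  have hA0 : 0 ≤ A := Real.sqrt_nonneg _
  have hB0 : 0 ≤ B := Real.sqrt_nonneg _
  have hB1 : B ≤ 1 := Real.sqrt_le_one.2 (by nlinarith [sq_nonneg (k*x)])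
  rcases eq_or_lt_of_le hA0 with h | h
  · rw [div_eq_mul_inv, ← h]; simp
  rcases eq_or_lt_of_le hB0 with h' | h'
  · rw [← h']; simp
  rw [div_le_div_iff₀ h (by positivity)]
  have hBB : B * B ≤ 1 := by nlinarith
  nlinarith [mul_le_mul_of_nonneg_left hBB h.le]

lemma integral_g_tail :
    (∫ x in (3/5 : ℝ)..1, (1 - x) ^ (-(1/2) : ℝ)) = 2 * Real.sqrt (2/5) := by
  rw [intervalIntegral.integral_comp_sub_left (fun y : ℝ => y ^ (-(1/2) : ℝ)) 1]
  rw [show (1:ℝ) - 1 = 0 by norm_num, show (1:ℝ) - 3/5 = 2/5 by norm_num]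
  rw [integral_rpow (Or.inl (by norm_num))]
  rw [show (-(1/2) : ℝ) + 1 = 1/2 by norm_num]
  rw [Real.zero_rpow (by norm_num), ← Real.sqrt_eq_rpow]
  ring

lemma ellE_le (k : ℝ) : ellE k ≤ 7/4 := by
  have hi1 : IntervalIntegrable
      (fun x : ℝ => Real.sqrt (1 - k ^ 2 * x ^ 2) / Real.sqrt (1 - x ^ 2)) volume 0 (3/5) :=
    (fE_int k).mono_set (by
      rw [Set.uIcc_of_le (by norm_num : (0:ℝ) ≤ 3/5), Set.uIcc_of_le (by norm_num : (0:ℝ) ≤ 1)]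
      exact Set.Icc_subset_Icc le_rfl (by norm_num))
  have hi2 : IntervalIntegrable
      (fun x : ℝ => Real.sqrt (1 - k ^ 2 * x ^ 2) / Real.sqrt (1 - x ^ 2)) volume (3/5) 1 :=
    (fE_int k).mono_set (by
      rw [Set.uIcc_of_le (by norm_num : (3/5:ℝ) ≤ 1), Set.uIcc_of_le (by norm_num : (0:ℝ) ≤ 1)]
      exact Set.Icc_subset_Icc (by norm_num) le_rfl)
  have hsplit := intervalIntegral.integral_add_adjacent_intervals hi1 hi2
  have h1 : (∫ x in (0:ℝ)..(3/5), Real.sqrt (1 - k ^ 2 * x ^ 2) / Real.sqrt (1 - x ^ 2)) ≤ 3/4 := by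
    have hpt : ∀ x ∈ Set.Icc (0:ℝ) (3/5),
        Real.sqrt (1 - k ^ 2 * x ^ 2) / Real.sqrt (1 - x ^ 2) ≤ (fun _ : ℝ => (5/4:ℝ)) x := by
      intro x hx
      have hx0 : 0 ≤ x := hx.1
      have hx1 : x ≤ 3/5 := hx.2
      have hA : (4/5 : ℝ) ≤ Real.sqrt (1 - x ^ 2) := by
        rw [show (4/5:ℝ) = Real.sqrt (16/25) by
          rw [show (16/25:ℝ) = (4/5)^2 by norm_num, Real.sqrt_sq (by norm_num)]]
        exact Real.sqrt_le_sqrt (by nlinarith)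
      calc Real.sqrt (1 - k ^ 2 * x ^ 2) / Real.sqrt (1 - x ^ 2)
          ≤ 1 / (4/5 : ℝ) := div_le_div₀ zero_le_one
            (Real.sqrt_le_one.2 (by nlinarith [sq_nonneg (k*x)])) (by norm_num) hA
        _ = 5/4 := by norm_num
    have hm := intervalIntegral.integral_mono_on (by norm_num : (0:ℝ) ≤ 3/5) hi1
      (_root_.intervalIntegrable_const (c := (5/4 : ℝ))) hpt
    rw [intervalIntegral.integral_const, smul_eq_mul] at hm
    linarith
  have h2 : (∫ x in (3/5:ℝ)..1, Real.sqrt (1 - k ^ 2 * x ^ 2) / Real.sqrt (1 - x ^ 2)) ≤ 1 := by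
    have hgi : IntervalIntegrable (fun x : ℝ => Real.sqrt (5/8) * (1 - x) ^ (-(1/2) : ℝ))
        volume (3/5) 1 :=
      (gInt.const_mul _).mono_set (by
        rw [Set.uIcc_of_le (by norm_num : (3/5:ℝ) ≤ 1), Set.uIcc_of_le (by norm_num : (0:ℝ) ≤ 1)]
        exact Set.Icc_subset_Icc (by norm_num) le_rfl)
    have hpt : ∀ x ∈ Set.Icc (3/5:ℝ) 1,
        Real.sqrt (1 - k ^ 2 * x ^ 2) / Real.sqrt (1 - x ^ 2) ≤
          Real.sqrt (5/8) * (1 - x) ^ (-(1/2) : ℝ) := by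
      intro x hx
      have hx0' : (0:ℝ) ≤ x := by linarith [hx.1]
      rcases eq_or_lt_of_le hx.2 with he | hlt
      · subst he
        simp [Real.zero_rpow]
      · have h1x : (0:ℝ) < 1 - x := by linarith
        have key : Real.sqrt ((8/5) * (1 - x)) ≤ Real.sqrt (1 - x ^ 2) :=
          Real.sqrt_le_sqrt (by nlinarith [hx.1])
        calc Real.sqrt (1 - k ^ 2 * x ^ 2) / Real.sqrt (1 - x ^ 2)
            ≤ 1 / Real.sqrt ((8/5) * (1 - x)) := div_le_div₀ zero_le_one
              (Real.sqrt_le_one.2 (by nlinarith [sq_nonneg (k*x)]))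
              (Real.sqrt_pos.2 (by nlinarith)) key
          _ = Real.sqrt (5/8) * (1 - x) ^ (-(1/2) : ℝ) := by
              rw [Real.sqrt_mul (by norm_num : (0:ℝ) ≤ 8/5),
                show ((1 - x) ^ (-(1/2) : ℝ)) = 1 / Real.sqrt (1 - x) by
                  rw [Real.rpow_neg h1x.le, ← Real.sqrt_eq_rpow, one_div],
                show Real.sqrt (5/8) = (Real.sqrt (8/5))⁻¹ by
                  rw [show (5/8:ℝ) = (8/5)⁻¹ by norm_num, Real.sqrt_inv]]
              rw [one_div, one_div, mul_inv]
    have hmono := intervalIntegral.integral_mono_on (by norm_num : (3/5:ℝ) ≤ 1) hi2 hgi hpt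
    have hval : (∫ x in (3/5:ℝ)..1, Real.sqrt (5/8) * (1 - x) ^ (-(1/2) : ℝ)) = 1 := by
      rw [intervalIntegral.integral_const_mul, integral_g_tail]
      rw [show (2:ℝ) * Real.sqrt (2/5) = Real.sqrt (4 * (2/5)) by
        rw [show (4:ℝ) * (2/5) = 2^2 * (2/5) by norm_num, Real.sqrt_mul (by positivity),
          Real.sqrt_sq (by norm_num)]]
      rw [← Real.sqrt_mul (by positivity)]
      norm_num
    linarith
  rw [ellE, ← hsplit]
  linarith


set_option maxHeartbeats 1000000 in
/-- Non-maximality for `mn` even: if `m > n` are coprime positive integers with `m·n`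
even, and `k = √((m² − n²)/(m² + 2mn))`, then
`2·(√(m² + 2mn)·E(k) − (mn/√(m² + 2mn))·K(k)) ≤ 4(m + n) − 3`; equivalently
`Λ_{4(m+n)−3}(M_{m,n}) ≤ 8π·(4(m+n) − 3)`. -/
theorem non_maximality_even (m n : ℕ) (hn : 0 < n) (hmn : n < m)
    (hcop : Nat.Coprime m n) (heven : Even (m * n)) :
    2 * (Real.sqrt ((m : ℝ) ^ 2 + 2 * m * n) *
        ellE (Real.sqrt (((m : ℝ) ^ 2 - n ^ 2) / ((m : ℝ) ^ 2 + 2 * m * n))) -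
      (m : ℝ) * n / Real.sqrt ((m : ℝ) ^ 2 + 2 * m * n) *
        ellK (Real.sqrt (((m : ℝ) ^ 2 - n ^ 2) / ((m : ℝ) ^ 2 + 2 * m * n)))) ≤
    4 * ((m : ℝ) + n) - 3 := by
  have hn1 : (1:ℝ) ≤ n := Nat.one_le_cast.mpr hn
  have hm' : (n:ℝ) + 1 ≤ m := by exact_mod_cast Nat.succ_le_of_lt hmn
  set M : ℝ := (m:ℝ) with hM
  set N : ℝ := (n:ℝ) with hN
  have hQpos : (0:ℝ) < M ^ 2 + 2 * M * N := by nlinarith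
  set k : ℝ := Real.sqrt ((M ^ 2 - N ^ 2) / (M ^ 2 + 2 * M * N)) with hk
  have hr0 : 0 ≤ (M ^ 2 - N ^ 2) / (M ^ 2 + 2 * M * N) := div_nonneg (by nlinarith) hQpos.le
  have hk2 : k ^ 2 = (M ^ 2 - N ^ 2) / (M ^ 2 + 2 * M * N) := Real.sq_sqrt hr0
  have hk2lt : k ^ 2 < 1 := by
    rw [hk2, div_lt_one hQpos]; nlinarith
  have hEK := ellE_le_ellK k hk2lt
  have hE7 := ellE_le k
  have hE0 := ellE_nonneg k
  set t : ℝ := Real.sqrt (M ^ 2 + 2 * M * N) with hts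
  have ht2 : t ^ 2 = M ^ 2 + 2 * M * N := Real.sq_sqrt hQpos.le
  have htpos : 0 < t := Real.sqrt_pos.2 hQpos
  have hA0 : (0:ℝ) ≤ 4 * (M + N) - 3 := by linarith
  have ha : (0:ℝ) ≤ M - N - 1 := by linarith
  have hb : (0:ℝ) ≤ N - 1 := by linarith
  have hpoly : (49/4) * (M ^ 2 + M * N) ^ 2 ≤ (4 * (M + N) - 3) ^ 2 * (M ^ 2 + 2 * M * N) := by
    nlinarith [ha, hb, mul_nonneg ha ha, mul_nonneg ha hb, mul_nonneg hb hb,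
      mul_nonneg (mul_nonneg ha ha) ha, mul_nonneg (mul_nonneg ha ha) hb,
      mul_nonneg (mul_nonneg ha hb) hb, mul_nonneg (mul_nonneg hb hb) hb,
      mul_nonneg (mul_nonneg ha ha) (mul_nonneg ha ha),
      mul_nonneg (mul_nonneg ha ha) (mul_nonneg ha hb),
      mul_nonneg (mul_nonneg ha ha) (mul_nonneg hb hb),
      mul_nonneg (mul_nonneg ha hb) (mul_nonneg hb hb),
      mul_nonneg (mul_nonneg hb hb) (mul_nonneg hb hb)]
  have hM0 : (0:ℝ) ≤ M := by linarith
  have hN0 : (0:ℝ) ≤ N := by linarith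
  have hnum0 : (0:ℝ) ≤ M ^ 2 + M * N := add_nonneg (sq_nonneg M) (mul_nonneg hM0 hN0)
  have hsq : (49/4) * (M ^ 2 + M * N) ^ 2 ≤ (4 * (M + N) - 3) ^ 2 * t ^ 2 := by
    rw [ht2]; exact hpoly
  have hkey : (7/2) * (M ^ 2 + M * N) ≤ (4 * (M + N) - 3) * t := by
    nlinarith [hsq, hnum0, mul_nonneg hA0 htpos.le]
  have h1 : t - M * N / t = (M ^ 2 + M * N) / t := by
    rw [eq_div_iff htpos.ne', sub_mul, div_mul_cancel₀ _ htpos.ne']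
    nlinarith [ht2]
  calc 2 * (t * ellE k - M * N / t * ellK k)
      ≤ 2 * (t * ellE k - M * N / t * ellE k) := by
        have := mul_le_mul_of_nonneg_left hEK (show (0:ℝ) ≤ M * N / t by positivity)
        linarith
    _ = 2 * (t - M * N / t) * ellE k := by ring
    _ = 2 * ((M ^ 2 + M * N) / t) * ellE k := by rw [h1]
    _ ≤ 2 * ((M ^ 2 + M * N) / t) * (7/4) := by
        apply mul_le_mul_of_nonneg_left hE7 (by positivity)
    _ = (7/2) * (M ^ 2 + M * N) / t := by ring
    _ ≤ 4 * (M + N) - 3 := by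
        rw [div_le_iff₀ htpos]; linarith [hkey]
end
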